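/- Let n = 4, κ = 3, f(x) = −x₁ + x₃² + x₄², F₁(x) = (x₁, x₁ + x₂, x₃ − 1), F₂(x) = (2 − x₃, 1 − x₄, 1 + x₄). For every fixed t with 0 < t ≤ 2 and every z ∈ [−t, 0], the point x_z = (t, z, 1, 0) is a KKT point of the Scholtes regularization S(t), and every such x_z is degenerate: for z = −t the unique multipliers are η₁ = 1, ν₁,₂ = 0, ν₁,₃ = 2 − t so ND2 fails; for z = 0 the unique multipliers are η₁ = 1, η₂ = 0, ν₁,₃ = 2 − t so ND2 fails; for z ∈ (−t, 0) the unique multipliers are η₁ = 1, ν₁,₃ = 2 − t and ND3 fails. In particular, S(t) possesses a continuum of KKT points in any neighborhood of x̄ = (0,0,1,0) for small t. -/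

import Mathlib

open Filter Topology Set

namespace MPCCPaper

variable {n κ : ℕ}

/-- Differential of the `j`-th component of `F` at `x`. -/
noncomputable def Dc (F : (Fin n → ℝ) → Fin κ → ℝ) (j : Fin κ) (x : Fin n → ℝ) :
    (Fin n → ℝ) →L[ℝ] ℝ :=
  fderiv ℝ (fun y => F y j) x

/-- The MPCC feasible set `M`. -/
def Mset (F1 F2 : (Fin n → ℝ) → Fin κ → ℝ) : Set (Fin n → ℝ) :=
  {x | ∀ j, F1 x j * F2 x j = 0 ∧ 0 ≤ F1 x j ∧ 0 ≤ F2 x j}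

/-- Feasible set `M^S(t)` of the Scholtes regularization. -/
def MS (F1 F2 : (Fin n → ℝ) → Fin κ → ℝ) (t : ℝ) : Set (Fin n → ℝ) :=
  {x | ∀ j, F1 x j * F2 x j ≤ t ∧ 0 ≤ F1 x j ∧ 0 ≤ F2 x j}

/-- Feasible set `M^{S=}(t)` of the smoothing with equality constraints. -/
def MSeq (F1 F2 : (Fin n → ℝ) → Fin κ → ℝ) (t : ℝ) : Set (Fin n → ℝ) :=
  {x | ∀ j, F1 x j * F2 x j = t ∧ 0 ≤ F1 x j ∧ 0 ≤ F2 x j}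

def a01 (F1 F2 : (Fin n → ℝ) → Fin κ → ℝ) (x : Fin n → ℝ) : Set (Fin κ) :=
  {j | F1 x j = 0 ∧ 0 < F2 x j}

def a10 (F1 F2 : (Fin n → ℝ) → Fin κ → ℝ) (x : Fin n → ℝ) : Set (Fin κ) :=
  {j | 0 < F1 x j ∧ F2 x j = 0}

def a00 (F1 F2 : (Fin n → ℝ) → Fin κ → ℝ) (x : Fin n → ℝ) : Set (Fin κ) :=
  {j | F1 x j = 0 ∧ F2 x j = 0}

/-- Active set `H(x)` of the regularized constraints. -/
def Hset (F1 F2 : (Fin n → ℝ) → Fin κ → ℝ) (t : ℝ) (x : Fin n → ℝ) : Set (Fin κ) :=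
  {j | F1 x j * F2 x j = t}

def N1set (F1 : (Fin n → ℝ) → Fin κ → ℝ) (x : Fin n → ℝ) : Set (Fin κ) :=
  {j | F1 x j = 0}

def N2set (F2 : (Fin n → ℝ) → Fin κ → ℝ) (x : Fin n → ℝ) : Set (Fin κ) :=
  {j | F2 x j = 0}

/-- MPCC-tailored linear independence constraint qualification. -/
def MPCCLICQ (F1 F2 : (Fin n → ℝ) → Fin κ → ℝ) (x : Fin n → ℝ) : Prop :=
  LinearIndependent ℝ
    (Sum.elim
      (fun j : ↥(a01 F1 F2 x ∪ a00 F1 F2 x) => Dc F1 j.1 x)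
      (fun j : ↥(a10 F1 F2 x ∪ a00 F1 F2 x) => Dc F2 j.1 x))

/-- Gradient of the product constraint `F1_j · F2_j` at `x`. -/
noncomputable def gradProd (F1 F2 : (Fin n → ℝ) → Fin κ → ℝ) (j : Fin κ) (x : Fin n → ℝ) :
    (Fin n → ℝ) →L[ℝ] ℝ :=
  F2 x j • Dc F1 j x + F1 x j • Dc F2 j x

/-- LICQ for the Scholtes regularization `S(t)`. -/
def SLICQ (F1 F2 : (Fin n → ℝ) → Fin κ → ℝ) (t : ℝ) (x : Fin n → ℝ) : Prop :=
  LinearIndependent ℝ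
    (Sum.elim (fun j : ↥(Hset F1 F2 t x) => gradProd F1 F2 j.1 x)
      (Sum.elim (fun j : ↥(N1set F1 x) => Dc F1 j.1 x)
        (fun j : ↥(N2set F2 x) => Dc F2 j.1 x)))

/-- W-stationarity with prescribed multipliers (supported on the active index sets). -/
structure WStatWith (f : (Fin n → ℝ) → ℝ) (F1 F2 : (Fin n → ℝ) → Fin κ → ℝ)
    (x : Fin n → ℝ) (σ1 σ2 ϱ1 ϱ2 : Fin κ → ℝ) : Prop where
  feas : x ∈ Mset F1 F2
  supp_s1 : ∀ j, j ∉ a01 F1 F2 x → σ1 j = 0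
  supp_s2 : ∀ j, j ∉ a10 F1 F2 x → σ2 j = 0
  supp_r1 : ∀ j, j ∉ a00 F1 F2 x → ϱ1 j = 0
  supp_r2 : ∀ j, j ∉ a00 F1 F2 x → ϱ2 j = 0
  stat : fderiv ℝ f x =
    ∑ j, (σ1 j • Dc F1 j x + σ2 j • Dc F2 j x + ϱ1 j • Dc F1 j x + ϱ2 j • Dc F2 j x)

/-- C-stationarity with prescribed multipliers. -/
def CStatWith (f : (Fin n → ℝ) → ℝ) (F1 F2 : (Fin n → ℝ) → Fin κ → ℝ)
    (x : Fin n → ℝ) (σ1 σ2 ϱ1 ϱ2 : Fin κ → ℝ) : Prop :=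
  WStatWith f F1 F2 x σ1 σ2 ϱ1 ϱ2 ∧ ∀ j ∈ a00 F1 F2 x, 0 ≤ ϱ1 j * ϱ2 j

/-- S-stationarity with prescribed multipliers. -/
def SStatWith (f : (Fin n → ℝ) → ℝ) (F1 F2 : (Fin n → ℝ) → Fin κ → ℝ)
    (x : Fin n → ℝ) (σ1 σ2 ϱ1 ϱ2 : Fin κ → ℝ) : Prop :=
  WStatWith f F1 F2 x σ1 σ2 ϱ1 ϱ2 ∧ ∀ j ∈ a00 F1 F2 x, 0 ≤ ϱ1 j ∧ 0 ≤ ϱ2 j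

/-- The MPCC Lagrange function for given multipliers. -/
noncomputable def Lag (f : (Fin n → ℝ) → ℝ) (F1 F2 : (Fin n → ℝ) → Fin κ → ℝ)
    (σ1 σ2 ϱ1 ϱ2 : Fin κ → ℝ) (x : Fin n → ℝ) : ℝ :=
  f x - ∑ j, (σ1 j * F1 x j + σ2 j * F2 x j + ϱ1 j * F1 x j + ϱ2 j * F2 x j)

/-- The Hessian of `g` at `x` as a bilinear map, evaluated at `(ξ, ζ)`. -/
noncomputable def hBil (g : (Fin n → ℝ) → ℝ) (x ξ ζ : Fin n → ℝ) : ℝ :=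
  iteratedFDeriv ℝ 2 g x ![ξ, ζ]

/-- The Hessian quadratic form of `g` at `x`. -/
noncomputable def hQ (g : (Fin n → ℝ) → ℝ) (x ξ : Fin n → ℝ) : ℝ := hBil g x ξ ξ

/-- The tangent space `T_x` of MPCC at `x`. -/
def Tspace (F1 F2 : (Fin n → ℝ) → Fin κ → ℝ) (x : Fin n → ℝ) : Set (Fin n → ℝ) :=
  {ξ | (∀ j ∈ a01 F1 F2 x ∪ a00 F1 F2 x, Dc F1 j x ξ = 0) ∧
       (∀ j ∈ a10 F1 F2 x ∪ a00 F1 F2 x, Dc F2 j x ξ = 0)}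

/-- Nondegeneracy of a bilinear form on a set (subspace). -/
def NondegOn (B : (Fin n → ℝ) → (Fin n → ℝ) → ℝ) (T : Set (Fin n → ℝ)) : Prop :=
  ∀ ξ ∈ T, (∀ ζ ∈ T, B ξ ζ = 0) → ξ = 0

/-- `Q` has negative index `q` on `T`: `q` is the maximal dimension of a subspace of `T`
on which `Q` is negative definite. -/
def HasNegIndexOn (Q : (Fin n → ℝ) → ℝ) (T : Set (Fin n → ℝ)) (q : ℕ) : Prop :=
  (∃ W : Submodule ℝ (Fin n → ℝ), (W : Set (Fin n → ℝ)) ⊆ T ∧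
      Module.finrank ℝ ↥W = q ∧ ∀ ξ ∈ W, ξ ≠ 0 → Q ξ < 0) ∧
  (∀ W : Submodule ℝ (Fin n → ℝ), (W : Set (Fin n → ℝ)) ⊆ T →
      (∀ ξ ∈ W, ξ ≠ 0 → Q ξ < 0) → Module.finrank ℝ ↥W ≤ q)

/-- Nondegenerate C-stationary point (NDC1, NDC2, NDC3) with prescribed multipliers. -/
def NondegCStat (f : (Fin n → ℝ) → ℝ) (F1 F2 : (Fin n → ℝ) → Fin κ → ℝ)
    (x : Fin n → ℝ) (σ1 σ2 ϱ1 ϱ2 : Fin κ → ℝ) : Prop :=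
  CStatWith f F1 F2 x σ1 σ2 ϱ1 ϱ2 ∧ MPCCLICQ F1 F2 x ∧
  (∀ j ∈ a00 F1 F2 x, 0 < ϱ1 j * ϱ2 j) ∧
  NondegOn (hBil (Lag f F1 F2 σ1 σ2 ϱ1 ϱ2) x) (Tspace F1 F2 x)

/-- Condition NDC4: non-biactive multipliers do not vanish. -/
def NDC4 (F1 F2 : (Fin n → ℝ) → Fin κ → ℝ) (x : Fin n → ℝ) (σ1 σ2 : Fin κ → ℝ) : Prop :=
  (∀ j ∈ a01 F1 F2 x, σ1 j ≠ 0) ∧ (∀ j ∈ a10 F1 F2 x, σ2 j ≠ 0)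

/-- The biactive index: number of negative biactive multiplier pairs. -/
noncomputable def BIndex (F1 F2 : (Fin n → ℝ) → Fin κ → ℝ) (x : Fin n → ℝ)
    (ϱ1 ϱ2 : Fin κ → ℝ) : ℕ :=
  {j | j ∈ a00 F1 F2 x ∧ ϱ1 j < 0 ∧ ϱ2 j < 0}.ncard

/-- The C-index of a C-stationary point equals `c`. -/
def HasCIndex (f : (Fin n → ℝ) → ℝ) (F1 F2 : (Fin n → ℝ) → Fin κ → ℝ)
    (x : Fin n → ℝ) (σ1 σ2 ϱ1 ϱ2 : Fin κ → ℝ) (c : ℕ) : Prop :=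
  ∃ q : ℕ,
    HasNegIndexOn (hQ (Lag f F1 F2 σ1 σ2 ϱ1 ϱ2) x) (Tspace F1 F2 x) q ∧
    c = q + BIndex F1 F2 x ϱ1 ϱ2

/-- Karush-Kuhn-Tucker point of the Scholtes regularization `S(t)` with multipliers. -/
structure KKTWith (f : (Fin n → ℝ) → ℝ) (F1 F2 : (Fin n → ℝ) → Fin κ → ℝ)
    (t : ℝ) (x : Fin n → ℝ) (η ν1 ν2 : Fin κ → ℝ) : Prop where
  feas : x ∈ MS F1 F2 t
  eta_nn : ∀ j, 0 ≤ η j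
  nu1_nn : ∀ j, 0 ≤ ν1 j
  nu2_nn : ∀ j, 0 ≤ ν2 j
  comp_eta : ∀ j, η j * (t - F1 x j * F2 x j) = 0
  comp_nu1 : ∀ j, ν1 j * F1 x j = 0
  comp_nu2 : ∀ j, ν2 j * F2 x j = 0
  stat : fderiv ℝ f x =
    ∑ j, (-(η j) • gradProd F1 F2 j x + ν1 j • Dc F1 j x + ν2 j • Dc F2 j x)

/-- The Lagrange function of the Scholtes regularization `S(t)`. -/
noncomputable def LagS (f : (Fin n → ℝ) → ℝ) (F1 F2 : (Fin n → ℝ) → Fin κ → ℝ)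
    (t : ℝ) (η ν1 ν2 : Fin κ → ℝ) (x : Fin n → ℝ) : ℝ :=
  f x - ∑ j, (η j * (t - F1 x j * F2 x j) + ν1 j * F1 x j + ν2 j * F2 x j)

/-- The tangent space `T^S_x` of `S(t)` at `x`. -/
def TspaceS (F1 F2 : (Fin n → ℝ) → Fin κ → ℝ) (t : ℝ) (x : Fin n → ℝ) :
    Set (Fin n → ℝ) :=
  {ξ | (∀ j ∈ Hset F1 F2 t x, gradProd F1 F2 j x ξ = 0) ∧
       (∀ j ∈ N1set F1 x, Dc F1 j x ξ = 0) ∧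
       (∀ j ∈ N2set F2 x, Dc F2 j x ξ = 0)}

/-- Nondegenerate KKT point of `S(t)` (ND1, ND2, ND3) with prescribed multipliers. -/
def NondegKKT (f : (Fin n → ℝ) → ℝ) (F1 F2 : (Fin n → ℝ) → Fin κ → ℝ)
    (t : ℝ) (x : Fin n → ℝ) (η ν1 ν2 : Fin κ → ℝ) : Prop :=
  KKTWith f F1 F2 t x η ν1 ν2 ∧ SLICQ F1 F2 t x ∧
  (∀ j ∈ Hset F1 F2 t x, 0 < η j) ∧
  (∀ j ∈ N1set F1 x, 0 < ν1 j) ∧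
  (∀ j ∈ N2set F2 x, 0 < ν2 j) ∧
  NondegOn (hBil (LagS f F1 F2 t η ν1 ν2) x) (TspaceS F1 F2 t x)

/-- KKT point of the smoothing `S^=(t)` with multipliers. -/
structure KKTEqWith (f : (Fin n → ℝ) → ℝ) (F1 F2 : (Fin n → ℝ) → Fin κ → ℝ)
    (t : ℝ) (x : Fin n → ℝ) (lam ν1 ν2 : Fin κ → ℝ) : Prop where
  feas : x ∈ MSeq F1 F2 t
  nu1_nn : ∀ j, 0 ≤ ν1 j
  nu2_nn : ∀ j, 0 ≤ ν2 j
  comp_nu1 : ∀ j, ν1 j * F1 x j = 0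
  comp_nu2 : ∀ j, ν2 j * F2 x j = 0
  stat : fderiv ℝ f x =
    ∑ j, (lam j • gradProd F1 F2 j x + ν1 j • Dc F1 j x + ν2 j • Dc F2 j x)

/-- The Lagrange function of the smoothing `S^=(t)`. -/
noncomputable def LagSeq (f : (Fin n → ℝ) → ℝ) (F1 F2 : (Fin n → ℝ) → Fin κ → ℝ)
    (t : ℝ) (lam ν1 ν2 : Fin κ → ℝ) (x : Fin n → ℝ) : ℝ :=
  f x - ∑ j, (lam j * (F1 x j * F2 x j - t) + ν1 j * F1 x j + ν2 j * F2 x j)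

/-- The tangent space `T^{S=}_x` of `S^=(t)` at `x`. -/
def TspaceSeq (F1 F2 : (Fin n → ℝ) → Fin κ → ℝ) (x : Fin n → ℝ) : Set (Fin n → ℝ) :=
  {ξ | (∀ j, gradProd F1 F2 j x ξ = 0) ∧
       (∀ j, F1 x j = 0 → Dc F1 j x ξ = 0) ∧
       (∀ j, F2 x j = 0 → Dc F2 j x ξ = 0)}

/-- LICQ for the smoothing `S^=(t)` at `x`: gradients of all active constraints
(all equality constraints together with the active bound constraints) are linearly
independent. -/
def SeqLICQ (F1 F2 : (Fin n → ℝ) → Fin κ → ℝ) (x : Fin n → ℝ) : Prop :=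
  LinearIndependent ℝ
    (Sum.elim (fun j : Fin κ => gradProd F1 F2 j x)
      (Sum.elim (fun j : ↥(N1set F1 x) => Dc F1 j.1 x)
        (fun j : ↥(N2set F2 x) => Dc F2 j.1 x)))

/-- Nondegenerate KKT point of the smoothing `S^=(t)` with prescribed multipliers. -/
def NondegKKTEq (f : (Fin n → ℝ) → ℝ) (F1 F2 : (Fin n → ℝ) → Fin κ → ℝ)
    (t : ℝ) (x : Fin n → ℝ) (lam ν1 ν2 : Fin κ → ℝ) : Prop :=
  KKTEqWith f F1 F2 t x lam ν1 ν2 ∧ SeqLICQ F1 F2 x ∧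
  (∀ j ∈ N1set F1 x, 0 < ν1 j) ∧
  (∀ j ∈ N2set F2 x, 0 < ν2 j) ∧
  NondegOn (hBil (LagSeq f F1 F2 t lam ν1 ν2) x) (TspaceSeq F1 F2 x)

/-- The critical cone `C_x` associated with an S-stationary point and its multipliers. -/
def Ccone (F1 F2 : (Fin n → ℝ) → Fin κ → ℝ) (x : Fin n → ℝ)
    (σ1 σ2 ϱ1 ϱ2 : Fin κ → ℝ) : Set (Fin n → ℝ) :=
  {ξ | (∀ j, ((j ∈ a01 F1 F2 x ∧ σ1 j ≠ 0) ∨ (j ∈ a00 F1 F2 x ∧ 0 < ϱ1 j)) →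
        Dc F1 j x ξ = 0) ∧
       (∀ j, ((j ∈ a10 F1 F2 x ∧ σ2 j ≠ 0) ∨ (j ∈ a00 F1 F2 x ∧ 0 < ϱ2 j)) →
        Dc F2 j x ξ = 0)}

/-- The cone `C^=_x` of critical directions used for MPCC-SOC. -/
def CconeEq (F1 F2 : (Fin n → ℝ) → Fin κ → ℝ) (x : Fin n → ℝ)
    (ϱ1 ϱ2 : Fin κ → ℝ) : Set (Fin n → ℝ) :=
  {ξ | (∀ j, (j ∈ a01 F1 F2 x ∨ (j ∈ a00 F1 F2 x ∧ 0 < ϱ1 j)) → Dc F1 j x ξ = 0) ∧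
       (∀ j, (j ∈ a10 F1 F2 x ∨ (j ∈ a00 F1 F2 x ∧ 0 < ϱ2 j)) → Dc F2 j x ξ = 0) ∧
       (∀ j ∈ a00 F1 F2 x, ϱ1 j = 0 → 0 ≤ Dc F1 j x ξ) ∧
       (∀ j ∈ a00 F1 F2 x, ϱ2 j = 0 → 0 ≤ Dc F2 j x ξ)}

/-- Strong second order sufficiency condition. -/
def SSOSC (f : (Fin n → ℝ) → ℝ) (F1 F2 : (Fin n → ℝ) → Fin κ → ℝ)
    (x : Fin n → ℝ) (σ1 σ2 ϱ1 ϱ2 : Fin κ → ℝ) : Prop :=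
  ∀ ξ ∈ Ccone F1 F2 x σ1 σ2 ϱ1 ϱ2, ξ ≠ 0 → 0 < hQ (Lag f F1 F2 σ1 σ2 ϱ1 ϱ2) x ξ

/-- Second order condition for MPCC (MPCC-SOC). -/
def MPCCSOC (f : (Fin n → ℝ) → ℝ) (F1 F2 : (Fin n → ℝ) → Fin κ → ℝ)
    (x : Fin n → ℝ) (σ1 σ2 ϱ1 ϱ2 : Fin κ → ℝ) : Prop :=
  ∀ ξ ∈ CconeEq F1 F2 x ϱ1 ϱ2, ξ ≠ 0 → 0 < hQ (Lag f F1 F2 σ1 σ2 ϱ1 ϱ2) x ξ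

noncomputable def fEx3 : (Fin 4 → ℝ) → ℝ :=
  fun x => -x 0 + (x 2)^2 + (x 3)^2

noncomputable def F1Ex3 : (Fin 4 → ℝ) → Fin 3 → ℝ :=
  fun x => ![x 0, x 0 + x 1, x 2 - 1]

noncomputable def F2Ex3 : (Fin 4 → ℝ) → Fin 3 → ℝ :=
  fun x => ![2 - x 2, 1 - x 3, 1 + x 3]

noncomputable def xbarEx3 : Fin 4 → ℝ := ![0, 0, 1, 0]

noncomputable def σ1Ex3 : Fin 3 → ℝ := ![-1, 0, 2]

/-!
At `x_z = (t, z, 1, 0)` we have `F₁ = (t, t + z, 0)` and `F₂ = (1, 1, 1)`, so complementarity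
kills `ν₂`, `ν₁,₁` and `η₃`, and the four coordinates of the stationarity equation read
`η₁ + η₂ = 1 + ν₁,₂`, `η₂ = ν₁,₂`, `t η₁ + ν₁,₃ = 2`, `(t + z) η₂ = 0`. Together with the
complementarity `z η₂ = 0` this forces `η₂ = 0`, whence the unique multipliers.
For `z ∈ (-t, 0)` the `x₂`-direction `e₂` (written `Pi.single 1 1`, indices being `0`-based)
lies in `T^S_x`, while the Lagrangian depends on `x₂` only through `F₁,₂`, whose multipliers
`η₂`, `ν₁,₂` vanish; so `e₂` is in the kernel of the Hessian on `T^S_x` and ND3 fails.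
-/

open ContinuousLinearMap

theorem gradProd_apply (F1 F2 : (Fin n → ℝ) → Fin κ → ℝ) (j : Fin κ) (x ξ : Fin n → ℝ) :
    gradProd F1 F2 j x ξ = F2 x j * Dc F1 j x ξ + F1 x j * Dc F2 j x ξ :=
  rfl

theorem hBil_eq_zero_of_forall_add_smul {g : (Fin n → ℝ) → ℝ} {v : Fin n → ℝ}
    (hg : ∀ y (s : ℝ), g (y + s • v) = g y) (x ζ : Fin n → ℝ) : hBil g x v ζ = 0 := by
  have hDg : ∀ s : ℝ, fderiv ℝ g (x + s • v) = fderiv ℝ g x := fun s => by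
    rw [← fderiv_comp_add_right]; simp only [hg]
  rw [hBil, iteratedFDeriv_two_apply]
  -- no smoothness is needed: where `fderiv g` is not differentiable its derivative is the junk `0`
  by_cases hd : DifferentiableAt ℝ (fderiv ℝ g) x
  · simp [← hd.lineDeriv_eq_fderiv, lineDeriv, hDg]
  · simp [fderiv_zero_of_not_differentiableAt hd]

@[simp] theorem fderiv_pi_eval (i : Fin n) (x : Fin n → ℝ) :
    fderiv ℝ (fun y : Fin n → ℝ => y i) x = proj i :=
  (hasFDerivAt_apply i x).fderiv

@[simp] theorem fderiv_fEx3_apply (x ξ : Fin 4 → ℝ) :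
    fderiv ℝ fEx3 x ξ = -ξ 0 + 2 * x 2 * ξ 2 + 2 * x 3 * ξ 3 := by
  unfold fEx3
  simp (disch := fun_prop) only [fderiv_fun_add, fderiv_fun_neg, fderiv_fun_pow, fderiv_pi_eval,
    add_apply, neg_apply, smul_apply, proj_apply, smul_eq_mul]
  ring

@[simp] theorem Dc_F1Ex3_apply (j : Fin 3) (x ξ : Fin 4 → ℝ) :
    Dc F1Ex3 j x ξ = ![ξ 0, ξ 0 + ξ 1, ξ 2] j := by
  fin_cases j <;> simp (disch := fun_prop) [Dc, F1Ex3, fderiv_fun_add, fderiv_sub_const]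

@[simp] theorem Dc_F2Ex3_apply (j : Fin 3) (x ξ : Fin 4 → ℝ) :
    Dc F2Ex3 j x ξ = ![-ξ 2, -ξ 3, ξ 3] j := by
  fin_cases j <;> simp [Dc, F2Ex3, fderiv_const_sub]

@[simp] theorem F1Ex3_xz (t z : ℝ) : F1Ex3 ![t, z, 1, 0] = ![t, t + z, 0] := by
  funext j; fin_cases j <;> simp [F1Ex3]

@[simp] theorem F2Ex3_xz (t z : ℝ) : F2Ex3 ![t, z, 1, 0] = ![1, 1, 1] := by
  funext j; fin_cases j <;> simp [F2Ex3]; norm_num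

theorem stat_xz_iff (t z : ℝ) (η ν1 ν2 : Fin 3 → ℝ) :
    fderiv ℝ fEx3 ![t, z, 1, 0] = ∑ j, (-(η j) • gradProd F1Ex3 F2Ex3 j ![t, z, 1, 0] +
        ν1 j • Dc F1Ex3 j ![t, z, 1, 0] + ν2 j • Dc F2Ex3 j ![t, z, 1, 0]) ↔
      -1 = -η 0 - η 1 + ν1 0 + ν1 1 ∧ 0 = -η 1 + ν1 1 ∧
        2 = t * η 0 - η 2 + ν1 2 - ν2 0 ∧ 0 = (t + z) * η 1 - ν2 1 + ν2 2 := by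
  constructor
  · intro h
    have e (i : Fin 4) := congr($h (Pi.single i 1))
    have e0 := e 0; have e1 := e 1; have e2 := e 2; have e3 := e 3
    simp [Fin.sum_univ_three, gradProd_apply] at e0 e1 e2 e3
    exact ⟨by linear_combination e0, by linear_combination e1, by linear_combination e2,
      by linear_combination e3⟩
  · rintro ⟨e0, e1, e2, e3⟩
    ext ξ
    simp [Fin.sum_univ_three, gradProd_apply]
    linear_combination ξ 0 * e0 + ξ 1 * e1 + ξ 2 * e2 + ξ 3 * e3

theorem kktWith_xz {t z : ℝ} (ht2 : t ≤ 2) (hz : z ∈ Icc (-t) 0) :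
    KKTWith fEx3 F1Ex3 F2Ex3 t ![t, z, 1, 0] ![1, 0, 0] ![0, 0, 2 - t] 0 where
  feas j := by fin_cases j <;> simp <;> and_intros <;> linarith [hz.1, hz.2]
  eta_nn j := by fin_cases j <;> simp
  nu1_nn j := by fin_cases j <;> simp [ht2]
  nu2_nn _ := le_rfl
  comp_eta j := by fin_cases j <;> simp
  comp_nu1 j := by fin_cases j <;> simp
  comp_nu2 _ := zero_mul _
  stat := (stat_xz_iff t z _ _ _).2 ⟨by simp, by simp, by simp, by simp⟩

theorem KKTWith.eq_of_xz {t z : ℝ} (ht : t ≠ 0) {η ν1 ν2 : Fin 3 → ℝ}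
    (h : KKTWith fEx3 F1Ex3 F2Ex3 t ![t, z, 1, 0] η ν1 ν2) :
    η = ![1, 0, 0] ∧ ν1 = ![0, 0, 2 - t] ∧ ν2 = 0 := by
  obtain ⟨e0, e1, e2, e3⟩ := (stat_xz_iff t z η ν1 ν2).1 h.stat
  have hν2 (j) : ν2 j = 0 :=
    (mul_eq_zero.1 (h.comp_nu2 j)).resolve_right (by fin_cases j <;> simp)
  have hη2 : η 2 = 0 := by simpa [ht] using h.comp_eta 2
  have hν10 : ν1 0 = 0 := by simpa [ht] using h.comp_nu1 0
  have hη1 : η 1 = 0 := by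
    obtain hη1 | rfl : η 1 = 0 ∨ z = 0 := by simpa using h.comp_eta 1
    · exact hη1
    · simpa [hν2, ht] using e3
  have hν11 : ν1 1 = 0 := by linarith
  have hη0 : η 0 = 1 := by linarith
  have hν12 : ν1 2 = 2 - t := by rw [hη0, hη2, hν2] at e2; linarith
  refine ⟨?_, ?_, funext hν2⟩ <;> ext j <;> fin_cases j <;> simp [hη0, hη1, hη2, hν10, hν11, hν12]

theorem LagS_Ex3_add_smul_single_one (t : ℝ) (y : Fin 4 → ℝ) (s : ℝ) :
    LagS fEx3 F1Ex3 F2Ex3 t ![1, 0, 0] ![0, 0, 2 - t] 0 (y + s • Pi.single 1 1) =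
      LagS fEx3 F1Ex3 F2Ex3 t ![1, 0, 0] ![0, 0, 2 - t] 0 y := by
  simp [LagS, fEx3, F1Ex3, F2Ex3, Fin.sum_univ_three]

theorem single_one_mem_TspaceS {t z : ℝ} (hz : z ∈ Ioo (-t) 0) :
    (Pi.single 1 1 : Fin 4 → ℝ) ∈ TspaceS F1Ex3 F2Ex3 t ![t, z, 1, 0] := by
  refine ⟨fun j hj => ?_, fun j hj => ?_, fun j _ => ?_⟩
  · fin_cases j <;> simp [Hset, gradProd_apply] at hj ⊢
    exact hz.2.ne hj
  · fin_cases j <;> simp [N1set] at hj ⊢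
    linarith [hz.1]
  · fin_cases j <;> simp

theorem not_nondegOn_xz {t z : ℝ} (hz : z ∈ Ioo (-t) 0) :
    ¬ NondegOn (hBil (LagS fEx3 F1Ex3 F2Ex3 t ![1, 0, 0] ![0, 0, 2 - t] 0) ![t, z, 1, 0])
        (TspaceS F1Ex3 F2Ex3 t ![t, z, 1, 0]) := fun hnd => by
  simpa using congrFun (hnd _ (single_one_mem_TspaceS hz)
    fun ζ _ => hBil_eq_zero_of_forall_add_smul (LagS_Ex3_add_smul_single_one t) _ ζ) 1

theorem dist_xz_xbarEx3_le {t z : ℝ} (hz : z ∈ Icc (-t) 0) : dist ![t, z, 1, 0] xbarEx3 ≤ t := by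
  rw [dist_pi_le_iff (by linarith [hz.1, hz.2])]
  intro i
  fin_cases i <;> simp [xbarEx3, abs_le] <;> and_intros <;> linarith [hz.1, hz.2]

theorem injective_xz (t : ℝ) : Function.Injective fun z : ℝ => (![t, z, 1, 0] : Fin 4 → ℝ) :=
  fun _ _ h => by simpa using congrFun h 1

/-- Example (continuum of KKT points): for `0 < t ≤ 2` every point
`x_z = (t, z, 1, 0)` with `z ∈ [-t, 0]` is a KKT point of `S(t)`, each of them is
degenerate in the stated way, and `S(t)` has a continuum of KKT points near
`x̄ = (0,0,1,0)` for small `t`. -/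
theorem example_continuum_kkt_points :
    (∀ t : ℝ, 0 < t → t ≤ 2 →
      (∀ z ∈ Set.Icc (-t) 0, ∃ η ν1 ν2 : Fin 3 → ℝ,
        KKTWith fEx3 F1Ex3 F2Ex3 t ![t, z, 1, 0] η ν1 ν2) ∧
      (KKTWith fEx3 F1Ex3 F2Ex3 t ![t, -t, 1, 0] ![1, 0, 0] ![0, 0, 2 - t] 0 ∧
        (∀ η ν1 ν2 : Fin 3 → ℝ, KKTWith fEx3 F1Ex3 F2Ex3 t ![t, -t, 1, 0] η ν1 ν2 →
          η = ![1, 0, 0] ∧ ν1 = ![0, 0, 2 - t] ∧ ν2 = 0) ∧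
        ¬ (∀ j ∈ N1set F1Ex3 ![t, -t, 1, 0], 0 < (![0, 0, 2 - t] : Fin 3 → ℝ) j)) ∧
      (KKTWith fEx3 F1Ex3 F2Ex3 t ![t, 0, 1, 0] ![1, 0, 0] ![0, 0, 2 - t] 0 ∧
        (∀ η ν1 ν2 : Fin 3 → ℝ, KKTWith fEx3 F1Ex3 F2Ex3 t ![t, 0, 1, 0] η ν1 ν2 →
          η = ![1, 0, 0] ∧ ν1 = ![0, 0, 2 - t] ∧ ν2 = 0) ∧
        ¬ (∀ j ∈ Hset F1Ex3 F2Ex3 t ![t, 0, 1, 0], 0 < (![1, 0, 0] : Fin 3 → ℝ) j)) ∧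
      (∀ z ∈ Set.Ioo (-t) 0,
        KKTWith fEx3 F1Ex3 F2Ex3 t ![t, z, 1, 0] ![1, 0, 0] ![0, 0, 2 - t] 0 ∧
        (∀ η ν1 ν2 : Fin 3 → ℝ, KKTWith fEx3 F1Ex3 F2Ex3 t ![t, z, 1, 0] η ν1 ν2 →
          η = ![1, 0, 0] ∧ ν1 = ![0, 0, 2 - t] ∧ ν2 = 0) ∧
        ¬ NondegOn (hBil (LagS fEx3 F1Ex3 F2Ex3 t ![1, 0, 0] ![0, 0, 2 - t] 0) ![t, z, 1, 0])
            (TspaceS F1Ex3 F2Ex3 t ![t, z, 1, 0]))) ∧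
    (∀ V ∈ 𝓝 xbarEx3, ∃ tbar > (0:ℝ), ∀ t ∈ Set.Ioo (0:ℝ) tbar,
      ∃ s : Set (Fin 4 → ℝ), s.Infinite ∧ ∀ y ∈ s, y ∈ V ∧
        ∃ η ν1 ν2 : Fin 3 → ℝ, KKTWith fEx3 F1Ex3 F2Ex3 t y η ν1 ν2) := by
  refine ⟨fun t ht ht2 => ⟨fun z hz => ⟨_, _, _, kktWith_xz ht2 hz⟩, ?_, ?_, ?_⟩, ?_⟩
  · have hz : -t ∈ Icc (-t) 0 := ⟨le_rfl, by linarith⟩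
    refine ⟨kktWith_xz ht2 hz, fun _ _ _ h => h.eq_of_xz ht.ne', fun h => ?_⟩
    simpa using h 1 (by simp [N1set])
  · have hz : (0 : ℝ) ∈ Icc (-t) 0 := ⟨by linarith, le_rfl⟩
    refine ⟨kktWith_xz ht2 hz, fun _ _ _ h => h.eq_of_xz ht.ne', fun h => ?_⟩
    simpa using h 1 (by simp [Hset])
  · exact fun z hz => ⟨kktWith_xz ht2 (Ioo_subset_Icc_self hz), fun _ _ _ h => h.eq_of_xz ht.ne',
      not_nondegOn_xz hz⟩
  · intro V hV
    obtain ⟨ε, hε, hball⟩ := Metric.mem_nhds_iff.mp hV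
    refine ⟨min ε 2, by positivity, fun t ⟨ht, htε⟩ => ?_⟩
    refine ⟨(fun z => ![t, z, 1, 0]) '' Icc (-t) 0,
      (Icc_infinite (by linarith)).image (injective_xz t).injOn, ?_⟩
    rintro _ ⟨z, hz, rfl⟩
    exact ⟨hball ((dist_xz_xbarEx3_le hz).trans_lt (htε.trans_le (min_le_left _ _))),
      _, _, _, kktWith_xz (htε.le.trans (min_le_right _ _)) hz⟩

end MPCCPaper
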